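/- For every alpha >= 1, every k >= 1, and every sufficiently small epsilon > 0, the generalized Reingold-Tarjan line graph RT^k_alpha (two points at distance 1 for k=1; RT^{k+1}_alpha is two copies of RT^k_alpha with spacing (1/alpha - epsilon) times the diameter of RT^k_alpha) has a unique alpha-stable perfect matching M, and c(M) >= (2 + 1/alpha - epsilon)^{k-1} while the minimum-cost perfect matching M* satisfies c(M*) <= 2^{k-1}. Hence c(M)/c(M*) >= ((2 + 1/alpha - epsilon)/2)^{k-1}. -/

import Mathlib

/-- Positions of the points of the generalized Reingold-Tarjan line graph
`RT^{j+1}_a` (on `2^(j+1)` points, indexed `0, …, 2^(j+1)-1`): `RT^1_a` is two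
points at distance `1`, and `RT^{j+2}_a` consists of two copies of
`RT^{j+1}_a` with spacing `(1/a - ε)` times the diameter of `RT^{j+1}_a`
between them (so the second copy is offset by `(1 + 1/a - ε)` times the
diameter, the leftmost point sitting at `0`). -/
noncomputable def RTa (a ε : ℝ) : ℕ → ℕ → ℝ
  | 0, i => if i = 0 then 0 else 1
  | j+1, i =>
      if i < 2^(j+1) then RTa a ε j i
      else RTa a ε j (i - 2^(j+1)) + (1 + (1/a - ε)) * RTa a ε j (2^(j+1) - 1)

section helpers
variable {a ε : ℝ}

lemma RTa_zero (a ε : ℝ) : ∀ j, RTa a ε j 0 = 0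
  | 0 => by simp [RTa]
  | j+1 => by
      have h : (0:ℕ) < 2^(j+1) := pow_pos (by norm_num) _
      simp [RTa, h, RTa_zero a ε j]

lemma RTa_nonneg (hs : 0 ≤ 1/a - ε) : ∀ j i, 0 ≤ RTa a ε j i
  | 0, i => by simp only [RTa]; split <;> norm_num
  | j+1, i => by
      simp only [RTa]
      split
      · exact RTa_nonneg hs j i
      · have h1 := RTa_nonneg hs j (i - 2^(j+1))
        have h2 := RTa_nonneg hs j (2^(j+1) - 1)
        nlinarith

lemma RTa_diam : ∀ j, RTa a ε j (2^(j+1) - 1) = (2 + 1/a - ε)^j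
  | 0 => by norm_num [RTa]
  | j+1 => by
      have hp : (0:ℕ) < 2^(j+1) := pow_pos (by norm_num) _
      have h2 : 2^(j+1+1) = 2*2^(j+1) := by ring
      simp only [RTa]
      rw [if_neg (by omega)]
      have e : 2^(j+1+1) - 1 - 2^(j+1) = 2^(j+1) - 1 := by omega
      rw [e, RTa_diam j]
      ring

lemma RTa_le_diam (hs : 0 ≤ 1/a - ε) : ∀ j i, i < 2^(j+1) → RTa a ε j i ≤ (2+1/a-ε)^j
  | 0, i, hi => by
      simp only [RTa, pow_zero]; split <;> norm_num
  | j+1, i, hi => by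
      have hβ0 : (0:ℝ) ≤ 2 + 1/a - ε := by linarith
      have hpow : (0:ℝ) ≤ (2+1/a-ε)^j := pow_nonneg hβ0 j
      have hp : (0:ℕ) < 2^(j+1) := pow_pos (by norm_num) _
      have h2 : 2^(j+1+1) = 2*2^(j+1) := by ring
      rw [pow_succ]
      simp only [RTa]
      split
      · nlinarith [RTa_le_diam hs j i (by assumption)]
      · have hi' : i - 2^(j+1) < 2^(j+1) := by omega
        have h1 := RTa_le_diam hs j _ hi'
        rw [RTa_diam]
        nlinarith

lemma RTa_mono (hs : 0 ≤ 1/a - ε) : ∀ j i₁ i₂, i₁ ≤ i₂ → i₂ < 2^(j+1) → RTa a ε j i₁ ≤ RTa a ε j i₂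
  | 0, i₁, i₂, h12, h2 => by
      by_cases h1 : i₁ = 0
      · rw [h1, RTa_zero]; exact RTa_nonneg hs 0 i₂
      · have h2' : i₂ ≠ 0 := by omega
        simp [RTa, h1, h2']
  | j+1, i₁, i₂, h12, h2 => by
      have hβ0 : (0:ℝ) ≤ 2 + 1/a - ε := by linarith
      have hpow : (0:ℝ) ≤ (2+1/a-ε)^j := pow_nonneg hβ0 j
      have hp : (0:ℕ) < 2^(j+1) := pow_pos (by norm_num) _
      have h2' : 2^(j+1+1) = 2*2^(j+1) := by ring
      simp only [RTa]
      by_cases hb : i₂ < 2^(j+1)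
      · rw [if_pos hb, if_pos (lt_of_le_of_lt h12 hb)]
        exact RTa_mono hs j _ _ h12 hb
      · rw [if_neg hb]
        by_cases ha1 : i₁ < 2^(j+1)
        · rw [if_pos ha1, RTa_diam]
          have := RTa_le_diam hs j i₁ ha1
          have h0 := RTa_nonneg hs j (i₂ - 2^(j+1))
          nlinarith
        · rw [if_neg ha1, RTa_diam]
          have := RTa_mono hs j (i₁ - 2^(j+1)) (i₂ - 2^(j+1)) (by omega) (by omega)
          linarith

lemma RTa_block : ∀ j m, m ≤ j → ∀ b r, 2^(m+1) ∣ b → r < 2^(m+1) → b + r < 2^(j+1) →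
    RTa a ε j (b+r) = RTa a ε j b + RTa a ε m r := by
  intro j
  induction j with
  | zero =>
      intro m hm b r hb hr hbr
      interval_cases m
      have hb0 : b = 0 := Nat.eq_zero_of_dvd_of_lt hb (by omega)
      subst hb0
      simp [RTa_zero]
  | succ j ih =>
      intro m hm b r hb hr hbr
      rcases eq_or_lt_of_le hm with hmj | hmj
      · subst hmj
        have hb0 : b = 0 := Nat.eq_zero_of_dvd_of_lt hb (by omega)
        subst hb0
        simp [RTa_zero]
      · have hm' : m ≤ j := by omega
        have hpm : (0:ℕ) < 2^(m+1) := pow_pos (by norm_num) _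
        have hdd : 2^(m+1) ∣ 2^(j+1) := pow_dvd_pow 2 (by omega)
        by_cases hi : b + r < 2^(j+1)
        · have hblt : b < 2^(j+1) := by omega
          simp only [RTa]
          rw [if_pos hi, if_pos hblt]
          exact ih m hm' b r hb hr hi
        · have hbig : 2^(j+1) ≤ b := by
            by_contra hc
            push_neg at hc
            have hd2 : 2^(m+1) ∣ 2^(j+1) - b := Nat.dvd_sub hdd hb
            have := Nat.le_of_dvd (by omega) hd2
            omega
          have h2' : 2^(j+1+1) = 2*2^(j+1) := by ring
          have e1 : b + r - 2^(j+1) = (b - 2^(j+1)) + r := by omega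
          simp only [RTa]
          rw [if_neg hi, if_neg (by omega), e1,
            ih m hm' (b - 2^(j+1)) r (Nat.dvd_sub hb hdd) hr (by omega)]
          ring

lemma two_pow_sub_one_lt {m j : ℕ} (h : m ≤ j+1) : 2^m - 1 < 2^(j+1) := by
  have h1 : (2:ℕ)^m ≤ 2^(j+1) := Nat.pow_le_pow_right (by norm_num) h
  have h2 : (0:ℕ) < 2^m := pow_pos (by norm_num) _
  omega

/-- block diameter: for an aligned block of size `2^m`. -/
lemma RTa_block_diam (hs : 0 ≤ 1/a - ε) (j m : ℕ) (hm1 : 1 ≤ m) (b : ℕ)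
    (hb : 2^m ∣ b) (hbk : b + 2^m ≤ 2^(j+1)) :
    RTa a ε j (b + (2^m - 1)) = RTa a ε j b + (2+1/a-ε)^(m-1) := by
  obtain ⟨m', rfl⟩ : ∃ m', m = m'+1 := ⟨m-1, by omega⟩
  have hp : (0:ℕ) < 2^(m'+1) := pow_pos (by norm_num) _
  have hmj : m' ≤ j := by
    by_contra hc
    have : (2:ℕ)^(j+1) < 2^(m'+1) := Nat.pow_lt_pow_right (by norm_num) (by omega)
    omega
  rw [RTa_block j m' hmj b (2^(m'+1) - 1) hb (by omega) (by omega), RTa_diam]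
  simp

/-- odd gap: the gap between `2^m*q - 1` and `2^m*q` for odd `q`. -/
lemma RTa_odd_gap (hs : 0 ≤ 1/a - ε) (j m q : ℕ) (hm : 1 ≤ m) (hq : ¬ 2 ∣ q)
    (hlt : 2^m * q < 2^(j+1)) :
    RTa a ε j (2^m * q) = RTa a ε j (2^m * q - 1) + (1/a - ε) * (2+1/a-ε)^(m-1) := by
  obtain ⟨m', rfl⟩ : ∃ m', m = m'+1 := ⟨m-1, by omega⟩
  obtain ⟨c, rfl⟩ : ∃ c, q = 2*c+1 := ⟨q/2, by omega⟩
  have hp : (0:ℕ) < 2^(m'+1) := pow_pos (by norm_num) _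
  have hmj : m' + 1 ≤ j := by
    by_contra hc
    have : (2:ℕ)^(j+1) ≤ 2^(m'+1) := Nat.pow_le_pow_right (by norm_num) (by omega)
    nlinarith
  have hb : 2^(m'+1+1) ∣ 2^(m'+1)*(2*c) := ⟨c, by ring⟩
  have e0 : 2^(m'+1)*(2*c+1) = 2^(m'+1)*(2*c) + 2^(m'+1) := by ring
  have e1 : 2^(m'+1)*(2*c) + (2^(m'+1) - 1) = 2^(m'+1)*(2*c+1) - 1 := by omega
  have hlt2 : (2:ℕ)^(m'+1) < 2^(m'+1+1) := Nat.pow_lt_pow_right (by norm_num) (by omega)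
  have hA := RTa_block (a:=a) (ε:=ε) j (m'+1) hmj (2^(m'+1)*(2*c)) (2^(m'+1)) hb hlt2 (by omega)
  have hB := RTa_block (a:=a) (ε:=ε) j (m'+1) hmj (2^(m'+1)*(2*c)) (2^(m'+1) - 1) hb (by omega) (by omega)
  rw [e1] at hB
  have hv1 : RTa a ε (m'+1) (2^(m'+1)) = (1 + (1/a - ε)) * (2+1/a-ε)^m' := by
    simp only [RTa]
    rw [if_neg (by omega)]
    simp [RTa_zero, RTa_diam]
  have hv2 : RTa a ε (m'+1) (2^(m'+1) - 1) = (2+1/a-ε)^m' := by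
    simp only [RTa]
    rw [if_pos (by omega)]
    exact RTa_diam m'
  rw [e0, hA, hv1,
    show 2^(m'+1)*(2*c) + 2^(m'+1) - 1 = 2^(m'+1)*(2*c+1) - 1 from by omega, hB, hv2]
  simp only [Nat.add_sub_cancel]
  ring

lemma hqbound {j m q : ℕ} (hq1 : 1 ≤ q) (hlt : 2^m * q < 2^(j+1)) :
    2^m * (q+1) ≤ 2^(j+1) := by
  have hm : m ≤ j := by
    by_contra hc
    have h1 : (2:ℕ)^(j+1) ≤ 2^m := Nat.pow_le_pow_right (by norm_num) (by omega)
    have h2 : (2:ℕ)^m ≤ 2^m * q := Nat.le_mul_of_pos_right _ (by omega)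
    omega
  have e : (2:ℕ)^(j+1) = 2^m * 2^(j+1-m) := by
    rw [← pow_add]; congr 1; omega
  rw [e] at hlt ⊢
  have := Nat.lt_of_mul_lt_mul_left hlt
  exact Nat.mul_le_mul_left _ (by omega)

/-- key distance bound: if `2^μ ∣ u`, `2^μ ∣ v+1`, `u ≤ v < 2^(j+1)`, positions of
`u` and `v` differ by at least a block diameter. -/
lemma RTa_blockdist (hs : 0 ≤ 1/a - ε) {j μ u v : ℕ} (hμ : 1 ≤ μ) (hv : v < 2^(j+1))
    (hdu : 2^μ ∣ u) (hdv : 2^μ ∣ (v+1)) (huv : u ≤ v) :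
    (2+1/a-ε)^(μ-1) ≤ RTa a ε j v - RTa a ε j u := by
  have hstep : u + 2^μ ≤ v + 1 := by
    have hd2 : 2^μ ∣ v + 1 - u := Nat.dvd_sub hdv hdu
    have := Nat.le_of_dvd (by omega) hd2
    omega
  have hbd := RTa_block_diam (a:=a) (ε:=ε) hs j μ hμ u hdu (by omega)
  have hmono := RTa_mono hs j (u + (2^μ - 1)) v
    (by have : (0:ℕ) < 2^μ := pow_pos (by norm_num) _; omega) hv
  linarith

lemma decomp2 {n : ℕ} (hn : n ≠ 0) (h2 : 2 ∣ n) : ∃ m q, 1 ≤ m ∧ ¬ 2 ∣ q ∧ n = 2^m * q := by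
  obtain ⟨m, q, hq, he⟩ := Nat.exists_eq_pow_mul_and_not_dvd hn 2 (by norm_num)
  refine ⟨m, q, ?_, hq, he⟩
  rcases Nat.eq_zero_or_pos m with rfl | h
  · simp at he; omega
  · exact h

lemma even_card_invol (f : ℕ → ℕ) (s : Finset ℕ) (hmaps : ∀ i ∈ s, f i ∈ s)
    (hinv : ∀ i ∈ s, f (f i) = i) (hne : ∀ i ∈ s, f i ≠ i) : Even s.card := by
  induction s using Finset.strongInduction with
  | _ s ih =>
    rcases s.eq_empty_or_nonempty with rfl | ⟨i, hi⟩
    · simp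
    · have hfi : f i ∈ s := hmaps i hi
      have hne_i : f i ≠ i := hne i hi
      set s' := (s.erase i).erase (f i) with hs'
      have hmem : ∀ j, j ∈ s' ↔ j ∈ s ∧ j ≠ i ∧ j ≠ f i := by
        intro j; simp [hs', Finset.mem_erase]; tauto
      have hsub : s' ⊂ s := by
        refine Finset.ssubset_iff_of_subset (fun j hj => ((hmem j).1 hj).1) |>.2 ⟨i, hi, ?_⟩
        simp [hmem]
      have hcard : s.card = s'.card + 2 := by
        rw [hs', Finset.card_erase_of_mem (Finset.mem_erase.2 ⟨hne_i, hfi⟩),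
          Finset.card_erase_of_mem hi]
        have : 1 ≤ s.card := Finset.card_pos.2 ⟨i, hi⟩
        have : 2 ≤ s.card := by
          have := Finset.one_lt_card.2 ⟨i, hi, f i, hfi, fun h => hne_i h.symm⟩
          omega
        omega
      have hE : Even s'.card := by
        refine ih s' hsub (fun p hp => ?_) (fun p hp => hinv p ((hmem p).1 hp).1)
          (fun p hp => hne p ((hmem p).1 hp).1)
        rcases (hmem p).1 hp with ⟨hps, hpi, hpfi⟩
        refine (hmem _).2 ⟨hmaps p hps, ?_, ?_⟩
        · intro h; exact hpfi (by rw [← hinv p hps, h])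
        · intro h
          have := hinv p hps
          rw [h, hinv i hi] at this
          exact hpi this.symm
      rw [hcard]
      rcases hE with ⟨c, hc⟩
      exact ⟨c+1, by omega⟩

lemma stable_forces {a ε : ℝ} (ha : 1 ≤ a) (hε : 0 < ε) (hεa : ε < 1/a) (j : ℕ) (M' : ℕ → ℕ)
    (hmatch : ∀ i < 2^(j+1), M' i < 2^(j+1) ∧ M' (M' i) = i ∧ M' i ≠ i)
    (hstab : ∀ u v : ℕ, u < 2^(j+1) → v < 2^(j+1) → u ≠ v → M' u ≠ v →
      ¬ (a * |RTa a ε j u - RTa a ε j v| <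
          min |RTa a ε j u - RTa a ε j (M' u)| |RTa a ε j v - RTa a ε j (M' v)|)) :
    ∀ m q, 1 ≤ m → ¬ 2 ∣ q → 2^m * q < 2^(j+1) → M' (2^m * q - 1) = 2^m * q := by
  have ha0 : (0:ℝ) < a := by linarith
  have hs : (0:ℝ) < 1/a - ε := by linarith
  have hs' : (0:ℝ) ≤ 1/a - ε := le_of_lt hs
  have hβ1 : (1:ℝ) ≤ 2 + 1/a - ε := by linarith
  intro m
  induction m using Nat.strong_induction_on with
  | _ m IH =>
  intro q hm hq hlt
  obtain ⟨c, rfl⟩ : ∃ c, q = c + 1 := ⟨q - 1, by omega⟩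
  have hc2 : 2 ∣ c := by omega
  set x := RTa a ε j with hx
  set K := 2^(j+1) with hK
  set n := 2^m * (c+1) with hn
  set b := 2^m * c with hb
  have hA2 : 2 ≤ 2^m := by
    have : (2:ℕ)^1 ≤ 2^m := Nat.pow_le_pow_right (by norm_num) hm
    simpa using this
  have hbn : b + 2^m = n := by rw [hn, hb]; ring
  have hdvd_n : 2^m ∣ n := ⟨c+1, rfl⟩
  have hdvd_b : 2^m ∣ b := ⟨c, rfl⟩
  have h2m : 2 ∣ 2^m := dvd_pow_self 2 (by omega)
  have h2n : 2 ∣ n := h2m.trans hdvd_n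
  have hnK : n < K := hlt
  have hqb : n + 2^m ≤ K := by
    have h := hqbound (j := j) (m := m) (q := c+1) (by omega) hlt
    have e : 2^m*(c+1+1) = n + 2^m := by rw [hn]; ring
    omega
  -- every point strictly inside the two blocks flanking the gap (n-1, n)
  -- is matched at a lower level
  have hmint : ∀ p, (b < p ∧ p + 1 < n) ∨ (n < p ∧ p + 1 < n + 2^m) →
      M' p ≠ n - 1 ∧ M' p ≠ n := by
    intro p hp
    have hpK : p < K := by rcases hp with ⟨_, h⟩ | ⟨_, h⟩ <;> omega
    by_cases hpar : 2 ∣ p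
    · -- p even: matched to p - 1
      have hp0 : p ≠ 0 := by rcases hp with ⟨h1, _⟩ | ⟨h1, _⟩ <;> omega
      obtain ⟨m2, q2, hm2, hq2, hpe2⟩ := decomp2 hp0 hpar
      have hm2m : m2 < m := by
        by_contra hcc
        have hdp : 2^m ∣ p := by
          rw [hpe2]; exact dvd_mul_of_dvd_left (pow_dvd_pow 2 (by omega)) _
        obtain ⟨r, hr⟩ := hdp
        rcases hp with ⟨h1, h2⟩ | ⟨h1, h2⟩
        · have hcr : c < r := Nat.lt_of_mul_lt_mul_left (a := 2^m) (by omega)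
          have hrc : r < c + 1 := Nat.lt_of_mul_lt_mul_left (a := 2^m) (by omega)
          omega
        · have hcr : c + 1 < r := Nat.lt_of_mul_lt_mul_left (a := 2^m) (by omega)
          have hrc : r < c + 2 := by
            refine Nat.lt_of_mul_lt_mul_left (a := 2^m) ?_
            have : 2^m * (c+2) = n + 2^m := by rw [hn]; ring
            omega
          omega
      have hIH : M' (p - 1) = p := by
        have := IH m2 hm2m q2 hm2 hq2 (by rw [← hpe2]; exact hpK)
        rw [← hpe2] at this
        exact this
      have hMp : M' p = p - 1 := by
        have h := (hmatch (p-1) (by omega)).2.1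
        rw [hIH] at h
        exact h
      rw [hMp]
      omega
    · -- p odd: matched to p + 1
      have h2p1 : 2 ∣ p + 1 := by omega
      obtain ⟨m2, q2, hm2, hq2, hpe2⟩ := decomp2 (by omega) h2p1
      have hm2m : m2 < m := by
        by_contra hcc
        have hdp : 2^m ∣ p + 1 := by
          rw [hpe2]; exact dvd_mul_of_dvd_left (pow_dvd_pow 2 (by omega)) _
        obtain ⟨r, hr⟩ := hdp
        rcases hp with ⟨h1, h2⟩ | ⟨h1, h2⟩
        · have hcr : c < r := Nat.lt_of_mul_lt_mul_left (a := 2^m) (by omega)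
          have hrc : r < c + 1 := Nat.lt_of_mul_lt_mul_left (a := 2^m) (by omega)
          omega
        · have hcr : c + 1 < r := Nat.lt_of_mul_lt_mul_left (a := 2^m) (by omega)
          have hrc : r < c + 2 := by
            refine Nat.lt_of_mul_lt_mul_left (a := 2^m) ?_
            have : 2^m * (c+2) = n + 2^m := by rw [hn]; ring
            omega
          omega
      have hMp : M' p = p + 1 := by
        have := IH m2 hm2m q2 hm2 hq2 (by rw [← hpe2]; omega)
        rw [← hpe2, Nat.add_sub_cancel] at this
        exact this
      rw [hMp]
      omega
  have hp0 : (0:ℝ) ≤ (2+1/a-ε)^(m-1) := pow_nonneg (by linarith) _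
  have hppos : (0:ℝ) < (2+1/a-ε)^(m-1) := pow_pos (by linarith) _
  -- distance bound for any alternative partner of n-1 or n
  have hdist : ∀ y, y < K → (M' y = n - 1 ∨ M' y = n) → y ≠ n - 1 → y ≠ n →
      (2+1/a-ε)^(m-1) ≤ |x (n-1) - x y| ∧ (2+1/a-ε)^(m-1) ≤ |x n - x y| := by
    intro y hyK hMy hy1 hy2
    have hxtn : x (n-1) ≤ x n := RTa_mono hs' j _ _ (by omega) hnK
    rcases (show y ≤ b ∨ (b < y ∧ y + 1 < n) ∨ (n < y ∧ y + 1 < n + 2^m) ∨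
        n + 2^m - 1 ≤ y from by omega) with hcs | hcs | hcs | hcs
    · have h1 : (2+1/a-ε)^(m-1) ≤ x (n-1) - x b := by
        refine RTa_blockdist hs' hm (by omega) hdvd_b ?_ (by omega)
        rw [show (n-1)+1 = n from by omega]
        exact hdvd_n
      have h2 : x y ≤ x b := RTa_mono hs' j _ _ hcs (by omega)
      constructor
      · rw [abs_of_nonneg (by linarith)]; linarith
      · rw [abs_of_nonneg (by linarith)]; linarith
    · rcases hMy with h | h
      · exact absurd h (hmint y (Or.inl hcs)).1
      · exact absurd h (hmint y (Or.inl hcs)).2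
    · rcases hMy with h | h
      · exact absurd h (hmint y (Or.inr hcs)).1
      · exact absurd h (hmint y (Or.inr hcs)).2
    · have h1 : (2+1/a-ε)^(m-1) ≤ x (n + 2^m - 1) - x n := by
        refine RTa_blockdist hs' hm (by omega) hdvd_n ?_ (by omega)
        rw [show (n + 2^m - 1)+1 = n + 2^m from by omega]
        exact Dvd.dvd.add hdvd_n dvd_rfl
      have h2 : x (n + 2^m - 1) ≤ x y := RTa_mono hs' j _ _ (by omega) hyK
      constructor
      · rw [abs_sub_comm, abs_of_nonneg (by linarith)]; linarith
      · rw [abs_sub_comm, abs_of_nonneg (by linarith)]; linarith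
  -- main blocking-pair argument
  by_contra hMt
  have ht := hmatch (n-1) (by omega)
  have hnn := hmatch n hnK
  have hd1 : (2+1/a-ε)^(m-1) ≤ |x (n-1) - x (M' (n-1))| := by
    refine (hdist (M' (n-1)) ht.1 (Or.inl ht.2.1) ht.2.2 hMt).1
  have hv't : M' n ≠ n - 1 := by
    intro h
    have := hnn.2.1
    rw [h] at this
    exact hMt this
  have hd2 : (2+1/a-ε)^(m-1) ≤ |x n - x (M' n)| := by
    refine (hdist (M' n) hnn.1 (Or.inr hnn.2.1) hv't hnn.2.2).2
  have hgap := RTa_odd_gap (a:=a) (ε:=ε) hs' j m (c+1) hm hq hlt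
  refine hstab (n-1) n (by omega) hnK (by omega) hMt ?_
  have hgv : x (n-1) - x n = -((1/a-ε) * (2+1/a-ε)^(m-1)) := by
    rw [hx] at *
    rw [hgap]; ring
  rw [hgv, abs_neg, abs_of_nonneg (mul_nonneg hs' hp0)]
  have key : a * (1/a - ε) < 1 := by
    have h1 : a * (1/a) = 1 := by field_simp
    nlinarith
  have hlt1 : a * ((1/a-ε) * (2+1/a-ε)^(m-1)) < (2+1/a-ε)^(m-1) := by
    nlinarith
  exact lt_of_lt_of_le hlt1 (le_min hd1 hd2)

lemma RTa_even_gap (hs : 0 ≤ 1/a - ε) {j i : ℕ} (hi : 2 ∣ i) (h : i + 1 < 2^(j+1)) :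
    RTa a ε j (i+1) = RTa a ε j i + 1 := by
  have hb := RTa_block (a:=a) (ε:=ε) j 0 (Nat.zero_le _) i 1 (by simpa using hi)
    (by norm_num) h
  simpa [RTa] using hb

lemma sum_two_even (N : ℕ) :
    ∑ t ∈ Finset.range (2*N), (if 2 ∣ t then (2:ℝ) else 0) = 2*N := by
  induction N with
  | zero => simp
  | succ N ihN =>
      rw [show 2*(N+1) = (2*N)+1+1 from by ring, Finset.sum_range_succ,
        Finset.sum_range_succ, ihN]
      rw [if_pos (by omega), if_neg (by omega)]
      push_cast
      ring

lemma mincost {a ε : ℝ} (ha : 1 ≤ a) (hε : 0 < ε) (hεa : ε < 1/a) (j : ℕ) (M' : ℕ → ℕ)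
    (hmatch : ∀ i < 2^(j+1), M' i < 2^(j+1) ∧ M' (M' i) = i ∧ M' i ≠ i) :
    ((2^(j+1) : ℕ) : ℝ) ≤ ∑ i ∈ Finset.range (2^(j+1)), |RTa a ε j i - RTa a ε j (M' i)| := by
  have ha0 : (0:ℝ) < a := by linarith
  have hs' : (0:ℝ) ≤ 1/a - ε := by linarith
  set x := RTa a ε j with hx
  set K := 2^(j+1) with hK
  -- counting even positions below gives a lower bound on distances
  have cnt : ∀ d p, p + d < K → (((Finset.Ico p (p+d)).filter (fun t => 2 ∣ t)).card : ℝ)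
      ≤ x (p+d) - x p := by
    intro d
    induction d with
    | zero => intro p h; simp
    | succ d ihd =>
        intro p h
        have h1 : p + d < K := by omega
        have e : Finset.Ico p (p+(d+1)) = insert (p+d) (Finset.Ico p (p+d)) := by
          rw [show p+(d+1) = (p+d)+1 from rfl, Nat.Ico_succ_right_eq_insert_Ico (by omega)]
        rw [e, Finset.filter_insert]
        have hih := ihd p h1
        by_cases hev : 2 ∣ (p+d)
        · rw [if_pos hev, Finset.card_insert_of_notMem (by simp)]
          have hgap := RTa_even_gap (a:=a) (ε:=ε) hs' hev h
          rw [show p + (d+1) = (p+d)+1 from rfl]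
          rw [hx] at *
          rw [hgap]
          push_cast
          linarith
        · rw [if_neg hev]
          have hmono := RTa_mono hs' j (p+d) (p+(d+1)) (by omega) h
          rw [hx] at *
          linarith
  -- per-index lower bound
  have hper : ∀ i ∈ Finset.range K,
      (((Finset.range K).filter (fun t => min i (M' i) ≤ t ∧ t < max i (M' i) ∧ 2 ∣ t)).card : ℝ)
      ≤ |x i - x (M' i)| := by
    intro i hi
    rw [Finset.mem_range] at hi
    obtain ⟨hMK, _, _⟩ := hmatch i hi
    rcases le_total i (M' i) with hle | hle
    · rw [min_eq_left hle, max_eq_right hle]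
      have hset : (Finset.range K).filter (fun t => i ≤ t ∧ t < M' i ∧ 2 ∣ t)
          = (Finset.Ico i (M' i)).filter (fun t => 2 ∣ t) := by
        ext t
        simp only [Finset.mem_filter, Finset.mem_range, Finset.mem_Ico]
        constructor
        · rintro ⟨_, h1, h2, h3⟩; exact ⟨⟨h1, h2⟩, h3⟩
        · rintro ⟨⟨h1, h2⟩, h3⟩; exact ⟨by omega, h1, h2, h3⟩
      rw [hset, abs_sub_comm, abs_of_nonneg (by linarith [RTa_mono hs' j i (M' i) hle hMK])]
      have := cnt (M' i - i) i (by omega)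
      rw [show i + (M' i - i) = M' i from by omega] at this
      exact this
    · rw [min_eq_right hle, max_eq_left hle]
      have hset : (Finset.range K).filter (fun t => M' i ≤ t ∧ t < i ∧ 2 ∣ t)
          = (Finset.Ico (M' i) i).filter (fun t => 2 ∣ t) := by
        ext t
        simp only [Finset.mem_filter, Finset.mem_range, Finset.mem_Ico]
        constructor
        · rintro ⟨_, h1, h2, h3⟩; exact ⟨⟨h1, h2⟩, h3⟩
        · rintro ⟨⟨h1, h2⟩, h3⟩; exact ⟨by omega, h1, h2, h3⟩
      rw [hset, abs_of_nonneg (by linarith [RTa_mono hs' j (M' i) i hle hi])]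
      have := cnt (i - M' i) (M' i) (by omega)
      rw [show M' i + (i - M' i) = i from by omega] at this
      exact this
  -- crossing count: each even position is crossed at least twice
  have hcross : ∀ t ∈ Finset.range K, (if 2 ∣ t then (2:ℝ) else 0) ≤
      ∑ i ∈ Finset.range K,
        (if min i (M' i) ≤ t ∧ t < max i (M' i) ∧ 2 ∣ t then (1:ℝ) else 0) := by
    intro t ht
    rw [Finset.mem_range] at ht
    by_cases h2t : 2 ∣ t
    · rw [if_pos h2t]
      have hex : ∃ i₀, i₀ < K ∧ i₀ ≤ t ∧ t < M' i₀ := by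
        by_contra hno
        push_neg at hno
        have hE := even_card_invol M' ((Finset.range K).filter (· ≤ t))
          (fun i hi => by
            simp only [Finset.mem_filter, Finset.mem_range] at hi ⊢
            exact ⟨(hmatch i hi.1).1, hno i hi.1 hi.2⟩)
          (fun i hi => by
            simp only [Finset.mem_filter, Finset.mem_range] at hi
            exact (hmatch i hi.1).2.1)
          (fun i hi => by
            simp only [Finset.mem_filter, Finset.mem_range] at hi
            exact (hmatch i hi.1).2.2)
        have hcard : ((Finset.range K).filter (· ≤ t)).card = t + 1 := by
          rw [show (Finset.range K).filter (· ≤ t) = Finset.range (t+1) from by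
            ext i
            simp only [Finset.mem_filter, Finset.mem_range]
            omega]
          exact Finset.card_range _
        rw [hcard] at hE
        rcases hE with ⟨c2, hc2⟩
        omega
      obtain ⟨i₀, hi₀K, hi₀t, hti₀⟩ := hex
      have hj₀K : M' i₀ < K := (hmatch i₀ hi₀K).1
      have hinv₀ : M' (M' i₀) = i₀ := (hmatch i₀ hi₀K).2.1
      have hne₀ : i₀ ≠ M' i₀ := by omega
      have hsub : ({i₀, M' i₀} : Finset ℕ) ⊆ Finset.range K := by
        intro z hz
        simp only [Finset.mem_insert, Finset.mem_singleton] at hz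
        rcases hz with rfl | rfl <;> simp [Finset.mem_range, hi₀K, hj₀K]
      have hmin₀ : min i₀ (M' i₀) = i₀ := min_eq_left (by omega)
      have hmax₀ : max i₀ (M' i₀) = M' i₀ := max_eq_right (by omega)
      have hminj : min (M' i₀) (M' (M' i₀)) = i₀ := by rw [hinv₀]; exact min_eq_right (by omega)
      have hmaxj : max (M' i₀) (M' (M' i₀)) = M' i₀ := by rw [hinv₀]; exact max_eq_left (by omega)
      calc (2:ℝ) = ∑ z ∈ ({i₀, M' i₀} : Finset ℕ),
            (if min z (M' z) ≤ t ∧ t < max z (M' z) ∧ 2 ∣ t then (1:ℝ) else 0) := by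
            rw [Finset.sum_pair hne₀]
            rw [if_pos (by rw [hmin₀, hmax₀]; exact ⟨hi₀t, hti₀, h2t⟩),
              if_pos (by rw [hminj, hmaxj]; exact ⟨hi₀t, hti₀, h2t⟩)]
            norm_num
        _ ≤ _ := by
            refine Finset.sum_le_sum_of_subset_of_nonneg hsub ?_
            intro z _ _
            split <;> norm_num
    · rw [if_neg h2t]
      refine Finset.sum_nonneg ?_
      intro z _
      split <;> norm_num
  -- assemble
  calc ((K:ℕ):ℝ) = ∑ t ∈ Finset.range K, (if 2 ∣ t then (2:ℝ) else 0) := by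
        rw [show K = 2*2^j from by rw [hK]; ring, sum_two_even]
        push_cast
        ring
    _ ≤ ∑ t ∈ Finset.range K, ∑ i ∈ Finset.range K,
          (if min i (M' i) ≤ t ∧ t < max i (M' i) ∧ 2 ∣ t then (1:ℝ) else 0) :=
        Finset.sum_le_sum hcross
    _ = ∑ i ∈ Finset.range K, ∑ t ∈ Finset.range K,
          (if min i (M' i) ≤ t ∧ t < max i (M' i) ∧ 2 ∣ t then (1:ℝ) else 0) :=
        Finset.sum_comm
    _ = ∑ i ∈ Finset.range K,
          (((Finset.range K).filter (fun t => min i (M' i) ≤ t ∧ t < max i (M' i) ∧ 2 ∣ t)).card : ℝ) := by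
        refine Finset.sum_congr rfl ?_
        intro i _
        rw [Finset.sum_boole]
    _ ≤ ∑ i ∈ Finset.range K, |x i - x (M' i)| := Finset.sum_le_sum hper

end helpers


set_option maxHeartbeats 2000000 in
/-- for every `a ≥ 1`, `k ≥ 1` and every sufficiently small
`ε > 0`, the graph `RT^k_a` (with weights `w u v = |x_u - x_v|`) has a unique
`a`-stable perfect matching `M`, with `c(M) ≥ (2 + 1/a - ε)^(k-1)`, while a
minimum-cost perfect matching `M*` satisfies `c(M*) ≤ 2^(k-1)`; hence
`c(M)/c(M*) ≥ ((2 + 1/a - ε)/2)^(k-1)`. Perfect matchings on the index set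
`{0, …, 2^k - 1}` are encoded as fixed-point-free involutions, and the cost of
`M` is `(∑ i, w i (M i)) / 2` (each edge counted twice in the sum). -/
theorem stmt_18 (a : ℝ) (ha : 1 ≤ a) (k : ℕ) (hk : 1 ≤ k) :
    ∃ ε₀ : ℝ, 0 < ε₀ ∧ ∀ ε : ℝ, 0 < ε → ε < ε₀ →
      ∃ M : ℕ → ℕ,
        -- M is a perfect matching
        (∀ i < 2^k, M i < 2^k ∧ M (M i) = i ∧ M i ≠ i) ∧
        -- M is a-stable
        (∀ u v : ℕ, u < 2^k → v < 2^k → u ≠ v → M u ≠ v →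
          ¬ (a * |RTa a ε (k-1) u - RTa a ε (k-1) v| <
              min |RTa a ε (k-1) u - RTa a ε (k-1) (M u)|
                  |RTa a ε (k-1) v - RTa a ε (k-1) (M v)|)) ∧
        -- M is the unique a-stable perfect matching
        (∀ M' : ℕ → ℕ, (∀ i < 2^k, M' i < 2^k ∧ M' (M' i) = i ∧ M' i ≠ i) →
          (∀ u v : ℕ, u < 2^k → v < 2^k → u ≠ v → M' u ≠ v →
            ¬ (a * |RTa a ε (k-1) u - RTa a ε (k-1) v| <
                min |RTa a ε (k-1) u - RTa a ε (k-1) (M' u)|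
                    |RTa a ε (k-1) v - RTa a ε (k-1) (M' v)|)) →
          ∀ i < 2^k, M' i = M i) ∧
        -- c(M) is at least the diameter
        (2 + 1/a - ε)^(k-1) ≤
          (∑ i ∈ Finset.range (2^k),
            |RTa a ε (k-1) i - RTa a ε (k-1) (M i)|) / 2 ∧
        ∃ Mstar : ℕ → ℕ,
          (∀ i < 2^k, Mstar i < 2^k ∧ Mstar (Mstar i) = i ∧ Mstar i ≠ i) ∧
          -- Mstar is a minimum-cost perfect matching
          (∀ M' : ℕ → ℕ, (∀ i < 2^k, M' i < 2^k ∧ M' (M' i) = i ∧ M' i ≠ i) →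
            (∑ i ∈ Finset.range (2^k),
              |RTa a ε (k-1) i - RTa a ε (k-1) (Mstar i)|) ≤
            ∑ i ∈ Finset.range (2^k),
              |RTa a ε (k-1) i - RTa a ε (k-1) (M' i)|) ∧
          (∑ i ∈ Finset.range (2^k),
            |RTa a ε (k-1) i - RTa a ε (k-1) (Mstar i)|) / 2 ≤ 2^(k-1) ∧
          ((2 + 1/a - ε)/2)^(k-1) ≤
            (∑ i ∈ Finset.range (2^k),
              |RTa a ε (k-1) i - RTa a ε (k-1) (M i)|) /
            (∑ i ∈ Finset.range (2^k),
              |RTa a ε (k-1) i - RTa a ε (k-1) (Mstar i)|) := by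
  obtain ⟨j, rfl⟩ : ∃ j, k = j + 1 := ⟨k-1, by omega⟩
  have ha0 : (0:ℝ) < a := by linarith
  refine ⟨1/a, by positivity, ?_⟩
  intro ε hε hεa
  simp only [Nat.add_sub_cancel]
  have hs : (0:ℝ) < 1/a - ε := by
    have : ε < 1/a := hεa
    linarith
  have hs' : (0:ℝ) ≤ 1/a - ε := hs.le
  have hβ1 : (1:ℝ) ≤ 2 + 1/a - ε := by linarith
  have hβ0 : (0:ℝ) < 2 + 1/a - ε := by linarith
  set K := 2^(j+1) with hK
  have hK2 : 2 ≤ K := by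
    have : (2:ℕ)^1 ≤ 2^(j+1) := Nat.pow_le_pow_right (by norm_num) (by omega)
    simpa [hK] using this
  have hKev : 2 ∣ K := dvd_pow_self 2 (by omega)
  set x := RTa a ε j with hx
  have hx0 : x 0 = 0 := RTa_zero a ε j
  have hxtop : x (K-1) = (2+1/a-ε)^j := RTa_diam j
  have hmono : ∀ i1 i2, i1 ≤ i2 → i2 < K → x i1 ≤ x i2 := fun i1 i2 h1 h2 =>
    RTa_mono hs' j i1 i2 h1 h2
  have hwgap : ∀ m q, 1 ≤ m → ¬ 2 ∣ q → 2^m*q < K →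
      x (2^m*q) - x (2^m*q - 1) = (1/a-ε)*(2+1/a-ε)^(m-1) := by
    intro m q h1 h2 h3
    have := RTa_odd_gap (a:=a) (ε:=ε) hs' j m q h1 h2 h3
    rw [hx]
    linarith [this]
  set M : ℕ → ℕ :=
    fun i => if i = 0 then K-1 else if i = K-1 then 0 else if i % 2 = 1 then i+1 else i-1
    with hM
  have hM0 : M 0 = K - 1 := by simp [hM]
  have hMtop : M (K-1) = 0 := by
    rw [hM]
    simp only []
    rw [if_neg (by omega : ¬ (K-1 = 0))]
    simp
  have hModd : ∀ i, i ≠ 0 → i ≠ K-1 → i % 2 = 1 → M i = i+1 := by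
    intro i h0 h1 h2
    rw [hM]; simp only []
    rw [if_neg h0, if_neg h1, if_pos h2]
  have hMev : ∀ i, i ≠ 0 → i ≠ K-1 → i % 2 = 0 → M i = i-1 := by
    intro i h0 h1 h2
    rw [hM]; simp only []
    rw [if_neg h0, if_neg h1, if_neg (by omega)]
  have hMmatch : ∀ i < K, M i < K ∧ M (M i) = i ∧ M i ≠ i := by
    intro i hi
    by_cases h0 : i = 0
    · subst h0
      refine ⟨by rw [hM0]; omega, by rw [hM0, hMtop], by rw [hM0]; omega⟩
    by_cases ht : i = K-1
    · subst ht
      refine ⟨by rw [hMtop]; omega, by rw [hMtop, hM0], by rw [hMtop]; omega⟩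
    by_cases hpar : i % 2 = 1
    · have h1 : M i = i + 1 := hModd i h0 ht hpar
      have h2 : M (i+1) = i := by
        have := hMev (i+1) (by omega) (by omega) (by omega)
        rw [this]
        omega
      refine ⟨by rw [h1]; omega, by rw [h1, h2], by rw [h1]; omega⟩
    · have h1 : M i = i - 1 := hMev i h0 ht (by omega)
      have h2 : M (i-1) = i := by
        have := hModd (i-1) (by omega) (by omega) (by omega)
        rw [this]
        omega
      refine ⟨by rw [h1]; omega, by rw [h1, h2], by rw [h1]; omega⟩
  have hia : 1/a ≤ 1 := by rw [div_le_one ha0]; exact ha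
  have hstab' : ∀ u v, u < v → v < K → M u ≠ v →
      min |x u - x (M u)| |x v - x (M v)| ≤ a * (x v - x u) := by
    intro u v huv hvK hMuv
    have huK : u < K := by omega
    have hxuv : x u ≤ x v := hmono u v huv.le hvK
    by_cases hup : u % 2 = 1
    · have hMu : M u = u + 1 := hModd u (by omega) (by omega) hup
      refine le_trans (min_le_left _ _) ?_
      rw [hMu, abs_sub_comm, abs_of_nonneg (by linarith [hmono u (u+1) (by omega) (by omega)])]
      have := hmono (u+1) v (by omega) hvK
      nlinarith
    by_cases hvp : v % 2 = 0
    · have hMv : M v = v - 1 := hMev v (by omega) (by omega) hvp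
      refine le_trans (min_le_right _ _) ?_
      rw [hMv, abs_of_nonneg (by linarith [hmono (v-1) v (by omega) hvK])]
      have := hmono u (v-1) (by omega) (by omega)
      nlinarith
    have hu2 : 2 ∣ u := by omega
    have hv2 : 2 ∣ (v+1) := by omega
    by_cases hu0 : u = 0
    · subst hu0
      have hvtop : v ≠ K - 1 := fun h => hMuv (by rw [hM0, h])
      obtain ⟨m, q, hm1, hq, he⟩ := decomp2 (show v+1 ≠ 0 from by omega) hv2
      have hvq : v = 2^m*q - 1 := by omega
      have hqK : 2^m*q < K := by omega
      have hMv : M v = v + 1 := hModd v (by omega) hvtop (by omega)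
      have hwv : |x v - x (M v)| = (1/a-ε)*(2+1/a-ε)^(m-1) := by
        rw [hMv, abs_sub_comm, show v + 1 = 2^m*q from by omega, hvq,
          abs_of_nonneg (by rw [hwgap m q hm1 hq hqK]; exact mul_nonneg hs' (by positivity))]
        exact hwgap m q hm1 hq hqK
      have hbd : (2+1/a-ε)^(m-1) ≤ x v - x 0 :=
        RTa_blockdist hs' hm1 hvK (dvd_zero _) (by rw [he]; exact dvd_mul_right _ _) (by omega)
      refine le_trans (min_le_right _ _) ?_
      rw [hwv]
      have hp0 : (0:ℝ) ≤ (2+1/a-ε)^(m-1) := by positivity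
      nlinarith [hbd]
    have hutop : u ≠ K - 1 := by omega
    obtain ⟨mu, qu, hmu, hqu, heu⟩ := decomp2 hu0 hu2
    have hqKu : 2^mu*qu < K := by omega
    have hMu : M u = u - 1 := hMev u hu0 hutop (by omega)
    have hwu : |x u - x (M u)| = (1/a-ε)*(2+1/a-ε)^(mu-1) := by
      rw [hMu, heu,
        abs_of_nonneg (by rw [hwgap mu qu hmu hqu hqKu]; exact mul_nonneg hs' (by positivity))]
      exact hwgap mu qu hmu hqu hqKu
    have hpu : (0:ℝ) ≤ (2+1/a-ε)^(mu-1) := by positivity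
    by_cases hvtop : v = K - 1
    · have hbd : (2+1/a-ε)^(mu-1) ≤ x v - x u := by
        refine RTa_blockdist hs' hmu hvK (by rw [heu]; exact dvd_mul_right _ _) ?_ (by omega)
        rw [show v + 1 = K from by omega, hK]
        refine pow_dvd_pow 2 ?_
        by_contra hc
        have h1 : (2:ℕ)^(j+1) < 2^mu := Nat.pow_lt_pow_right (by norm_num) (by omega)
        have h2 : (2:ℕ)^mu ≤ 2^mu * qu := Nat.le_mul_of_pos_right _ (by omega)
        omega
      refine le_trans (min_le_left _ _) ?_
      rw [hwu]
      nlinarith [hbd]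
    · obtain ⟨mv, qv, hmv, hqv, hev⟩ := decomp2 (show v+1 ≠ 0 from by omega) hv2
      have hqKv : 2^mv*qv < K := by omega
      have hvq : v = 2^mv*qv - 1 := by omega
      have hMv : M v = v + 1 := hModd v (by omega) hvtop (by omega)
      have hwv : |x v - x (M v)| = (1/a-ε)*(2+1/a-ε)^(mv-1) := by
        rw [hMv, abs_sub_comm, show v + 1 = 2^mv*qv from by omega, hvq,
          abs_of_nonneg (by rw [hwgap mv qv hmv hqv hqKv]; exact mul_nonneg hs' (by positivity))]
        exact hwgap mv qv hmv hqv hqKv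
      have hpv : (0:ℝ) ≤ (2+1/a-ε)^(mv-1) := by positivity
      rcases le_total mu mv with hle | hle
      · have hbd : (2+1/a-ε)^(mu-1) ≤ x v - x u := by
          refine RTa_blockdist hs' hmu hvK (by rw [heu]; exact dvd_mul_right _ _) ?_ (by omega)
          rw [show v + 1 = 2^mv*qv from by omega]
          exact dvd_mul_of_dvd_left (pow_dvd_pow 2 hle) _
        refine le_trans (min_le_left _ _) ?_
        rw [hwu]
        nlinarith [hbd]
      · have hbd : (2+1/a-ε)^(mv-1) ≤ x v - x u := by
          refine RTa_blockdist hs' hmv hvK ?_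
            (by rw [show v + 1 = 2^mv*qv from by omega]; exact dvd_mul_right _ _) (by omega)
          rw [heu]
          exact dvd_mul_of_dvd_left (pow_dvd_pow 2 hle) _
        refine le_trans (min_le_right _ _) ?_
        rw [hwv]
        nlinarith [hbd]
  have hstabM : ∀ u v : ℕ, u < K → v < K → u ≠ v → M u ≠ v →
      ¬ (a * |x u - x v| < min |x u - x (M u)| |x v - x (M v)|) := by
    intro u v hu hv huv hMuv
    rcases lt_or_gt_of_ne huv with h | h
    · have hb := hstab' u v h hv hMuv
      rw [abs_sub_comm, abs_of_nonneg (by linarith [hmono u v h.le hv])]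
      exact not_lt.2 hb
    · have hMvu : M v ≠ u := by
        intro hcon
        have h2 := (hMmatch v hv).2.1
        rw [hcon] at h2
        exact hMuv h2
      have hb := hstab' v u h hu hMvu
      rw [abs_of_nonneg (by linarith [hmono v u h.le hu]), min_comm]
      exact not_lt.2 hb
  have huniq : ∀ M' : ℕ → ℕ, (∀ i < K, M' i < K ∧ M' (M' i) = i ∧ M' i ≠ i) →
      (∀ u v : ℕ, u < K → v < K → u ≠ v → M' u ≠ v →
        ¬ (a * |x u - x v| < min |x u - x (M' u)| |x v - x (M' v)|)) →
      ∀ i < K, M' i = M i := by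
    intro M' hm' hst' i hiK
    have P := stable_forces ha hε hεa j M' hm' hst'
    by_cases h0 : i = 0
    · subst h0
      rw [hM0]
      have h := hm' 0 (by omega)
      by_contra hne
      set v := M' 0 with hv
      have hvK : v < K := h.1
      have hv0 : v ≠ 0 := h.2.2
      have hinv : M' v = 0 := h.2.1
      by_cases hpar : 2 ∣ v
      · obtain ⟨m, q, hm1, hq, he⟩ := decomp2 hv0 hpar
        have hP := P m q hm1 hq (by rw [← he]; exact hvK)
        rw [← he] at hP
        have h2 := (hm' (v-1) (by omega)).2.1
        rw [hP] at h2
        have : v - 1 = 0 := by rw [← h2, hinv]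
        omega
      · have hvK1 : v + 1 < K := by omega
        obtain ⟨m, q, hm1, hq, he⟩ := decomp2 (show v+1 ≠ 0 from by omega) (by omega)
        have hP := P m q hm1 hq (by rw [← he]; omega)
        rw [← he, Nat.add_sub_cancel] at hP
        have : (0:ℕ) = v + 1 := by rw [← hinv, hP]
        omega
    by_cases htop : i = K - 1
    · subst htop
      rw [hMtop]
      have h := hm' (K-1) (by omega)
      by_contra hne
      set v := M' (K-1) with hv
      have hvK : v < K := h.1
      have hinv : M' v = K-1 := h.2.1
      have hvne : v ≠ K-1 := h.2.2
      by_cases hpar : 2 ∣ v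
      · obtain ⟨m, q, hm1, hq, he⟩ := decomp2 hne hpar
        have hP := P m q hm1 hq (by rw [← he]; exact hvK)
        rw [← he] at hP
        have h2 := (hm' (v-1) (by omega)).2.1
        rw [hP] at h2
        have : v - 1 = K - 1 := by rw [← h2, hinv]
        omega
      · have hvK1 : v + 1 < K := by omega
        obtain ⟨m, q, hm1, hq, he⟩ := decomp2 (show v+1 ≠ 0 from by omega) (by omega)
        have hP := P m q hm1 hq (by rw [← he]; omega)
        rw [← he, Nat.add_sub_cancel] at hP
        have : v + 1 = K - 1 := by rw [← hP, hinv]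
        omega
    by_cases hpar : 2 ∣ i
    · obtain ⟨m, q, hm1, hq, he⟩ := decomp2 h0 hpar
      have hP := P m q hm1 hq (by rw [← he]; exact hiK)
      rw [← he] at hP
      have h2 := (hm' (i-1) (by omega)).2.1
      rw [hP] at h2
      rw [h2, hMev i h0 htop (by omega)]
    · have hi1 : i + 1 < K := by omega
      obtain ⟨m, q, hm1, hq, he⟩ := decomp2 (show i+1 ≠ 0 from by omega) (by omega)
      have hP := P m q hm1 hq (by rw [← he]; omega)
      rw [← he, Nat.add_sub_cancel] at hP
      rw [hP, hModd i (by omega) htop (by omega)]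
  have hp0j : (0:ℝ) ≤ (2+1/a-ε)^j := by positivity
  have hterm0 : |x 0 - x (M 0)| = (2+1/a-ε)^j := by
    rw [hM0, hx0, hxtop, zero_sub, abs_neg, abs_of_nonneg hp0j]
  have htermT : |x (K-1) - x (M (K-1))| = (2+1/a-ε)^j := by
    rw [hMtop, hx0, hxtop, sub_zero, abs_of_nonneg hp0j]
  have hsum_lb : (2+1/a-ε)^j * 2 ≤ ∑ i ∈ Finset.range K, |x i - x (M i)| := by
    have hsub : ({0, K-1} : Finset ℕ) ⊆ Finset.range K := by
      intro z hz
      simp only [Finset.mem_insert, Finset.mem_singleton] at hz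
      rcases hz with rfl | rfl <;> exact Finset.mem_range.2 (by omega)
    calc (2+1/a-ε)^j * 2 = ∑ z ∈ ({0, K-1} : Finset ℕ), |x z - x (M z)| := by
          rw [Finset.sum_pair (by omega : (0:ℕ) ≠ K-1), hterm0, htermT]; ring
      _ ≤ _ := Finset.sum_le_sum_of_subset_of_nonneg hsub (fun z _ _ => abs_nonneg _)
  set Mstar : ℕ → ℕ := fun i => if i % 2 = 0 then i+1 else i-1 with hMs
  have hMsev : ∀ i, i % 2 = 0 → Mstar i = i+1 := by
    intro i h; rw [hMs]; simp only []; rw [if_pos h]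
  have hMsodd : ∀ i, i % 2 = 1 → Mstar i = i-1 := by
    intro i h; rw [hMs]; simp only []; rw [if_neg (by omega)]
  have hMsmatch : ∀ i < K, Mstar i < K ∧ Mstar (Mstar i) = i ∧ Mstar i ≠ i := by
    intro i hi
    by_cases h : i % 2 = 0
    · have h1 := hMsev i h
      have h2 := hMsodd (i+1) (by omega)
      refine ⟨by rw [h1]; omega, by rw [h1, h2]; omega, by rw [h1]; omega⟩
    · have h1 := hMsodd i (by omega)
      have h2 := hMsev (i-1) (by omega)
      refine ⟨by rw [h1]; omega, by rw [h1, h2]; omega, by rw [h1]; omega⟩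
  have hsum_star : ∑ i ∈ Finset.range K, |x i - x (Mstar i)| = (K:ℝ) := by
    have hterms : ∀ i ∈ Finset.range K, |x i - x (Mstar i)| = 1 := by
      intro i hi
      rw [Finset.mem_range] at hi
      by_cases h : i % 2 = 0
      · rw [hMsev i h]
        have hg : x (i+1) = x i + 1 :=
          RTa_even_gap hs' (by omega) (show i+1 < 2^(j+1) from by omega)
        rw [hg, show x i - (x i + 1) = -1 from by ring, abs_neg, abs_one]
      · rw [hMsodd i (by omega)]
        have hg : x ((i-1)+1) = x (i-1) + 1 :=
          RTa_even_gap hs' (by omega) (show (i-1)+1 < 2^(j+1) from by omega)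
        rw [show (i-1)+1 = i from by omega] at hg
        rw [hg, show x (i-1) + 1 - x (i-1) = 1 from by ring, abs_one]
    rw [Finset.sum_congr rfl hterms, Finset.sum_const, Finset.card_range, nsmul_eq_mul, mul_one]
  have hKR : ((K:ℕ):ℝ) = 2^(j+1) := by rw [hK]; push_cast; ring
  refine ⟨M, hMmatch, hstabM, huniq, ?_, Mstar, hMsmatch, ?_, ?_, ?_⟩
  · rw [le_div_iff₀ (by norm_num : (0:ℝ) < 2)]
    exact hsum_lb
  · intro M'' hm''
    rw [hsum_star]
    exact mincost ha hε hεa j M'' hm''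
  · rw [hsum_star, hKR]
    exact le_of_eq (by rw [pow_succ]; ring)
  · rw [hsum_star, hKR]
    have h2j : ((2:ℝ))^j ≠ 0 := by positivity
    have heq : ((2+1/a-ε)/2)^j = ((2+1/a-ε)^j * 2) / (2:ℝ)^(j+1) := by
      rw [div_pow, pow_succ]
      field_simp
    rw [heq]
    have hKpos : (0:ℝ) < (2:ℝ)^(j+1) := by positivity
    gcongr
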